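/- arXiv:1807.09813 — 8 statements merged into one kernel-verified Lean document; each statement's English description precedes it below -/
import Mathlib

section
/- If β ∈ C_{TV,ω}(L), then ‖β‖_1 ≤ 8 · (max_{1≤j≤p} (d_j+1)) · (max_{j,l} ω_{j,l} / min_{j,l} ω_{j,l}) · ‖β_L‖_1, and consequently ‖β‖_1 ≤ √|L| · 8 · (max_{1≤j≤p} (d_j+1)) · (max_{j,l} ω_{j,l} / min_{j,l} ω_{j,l}) · ‖β_L‖_2. -/
/-- The anchored weighted total-variation norm
`‖u‖_{TV,w} = w₁|u₁| + Σ_{l=2}^{m+1} w_l |u_l − u_{l−1}|` on `ℝ^{m+1}`. -/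
noncomputable def tvNorm {m : ℕ} (w u : Fin (m + 1) → ℝ) : ℝ :=
  w 0 * |u 0| + ∑ l : Fin m, w l.succ * |u l.succ - u l.castSucc|

/-- Restriction of a vector to a set of coordinates (`u_K`). -/
def restrictF {m : ℕ} (K : Finset (Fin m)) (u : Fin m → ℝ) : Fin m → ℝ :=
  fun l => if l ∈ K then u l else 0

lemma tv_nonneg {m : ℕ} {w : Fin (m+1) → ℝ} (hw : ∀ l, 0 ≤ w l) (u : Fin (m+1) → ℝ) :
    0 ≤ tvNorm w u :=
  add_nonneg (mul_nonneg (hw 0) (abs_nonneg _))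
    (Finset.sum_nonneg fun k _ => mul_nonneg (hw _) (abs_nonneg _))

lemma abs_le_anchor_add_tv {m : ℕ} (u : Fin (m + 1) → ℝ) (l : Fin (m + 1)) :
    |u l| ≤ |u 0| + ∑ k : Fin m, |u k.succ - u k.castSucc| := by
  set f : ℕ → ℝ := fun n => u ⟨min n m, Nat.lt_succ_of_le (min_le_right n m)⟩ with hf
  have h0 : f 0 = u 0 := by simp [hf]
  have hlv : f l.1 = u l := by
    have h : min l.1 m = l.1 := min_eq_left (Nat.lt_succ_iff.mp l.isLt)
    simp only [hf, h]
  have hsum : ∑ k : Fin m, |u k.succ - u k.castSucc| = ∑ i ∈ Finset.range m, |f (i+1) - f i| := by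
    rw [← Fin.sum_univ_eq_sum_range (fun i => |f (i+1) - f i|) m]
    refine Finset.sum_congr rfl fun k _ => ?_
    have h1 : min (k.1 + 1) m = k.1 + 1 := min_eq_left k.isLt
    have h2 : min k.1 m = k.1 := min_eq_left (le_of_lt k.isLt)
    simp only [hf, h1, h2]
    rfl
  have htel : u l - u 0 = ∑ i ∈ Finset.range l.1, (f (i+1) - f i) := by
    rw [Finset.sum_range_sub f l.1, hlv, h0]
  have h1 : |u l - u 0| ≤ ∑ i ∈ Finset.range l.1, |f (i+1) - f i| := by
    rw [htel]; exact Finset.abs_sum_le_sum_abs _ _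
  have h2 : ∑ i ∈ Finset.range l.1, |f (i+1) - f i| ≤ ∑ i ∈ Finset.range m, |f (i+1) - f i| :=
    Finset.sum_le_sum_of_subset_of_nonneg
      (Finset.range_subset_range.mpr (Nat.lt_succ_iff.mp l.isLt))
      (fun i _ _ => abs_nonneg _)
  calc |u l| = |u 0 + (u l - u 0)| := by ring_nf
    _ ≤ |u 0| + |u l - u 0| := abs_add_le _ _
    _ ≤ |u 0| + ∑ i ∈ Finset.range m, |f (i+1) - f i| := by linarith
    _ = |u 0| + ∑ k : Fin m, |u k.succ - u k.castSucc| := by rw [hsum]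

lemma sum_abs_le_tv {m : ℕ} {w u : Fin (m+1) → ℝ} {ωmin : ℝ} (hmin : 0 < ωmin)
    (hw : ∀ l, ωmin ≤ w l) :
    ωmin * ∑ l, |u l| ≤ ((m : ℝ) + 1) * tvNorm w u := by
  have key : ∀ l : Fin (m+1), ωmin * |u l| ≤ tvNorm w u := by
    intro l
    calc ωmin * |u l| ≤ ωmin * (|u 0| + ∑ k : Fin m, |u k.succ - u k.castSucc|) :=
          mul_le_mul_of_nonneg_left (abs_le_anchor_add_tv u l) hmin.le
      _ = ωmin * |u 0| + ∑ k : Fin m, ωmin * |u k.succ - u k.castSucc| := by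
          rw [mul_add, Finset.mul_sum]
      _ ≤ tvNorm w u := by
          unfold tvNorm
          exact add_le_add (mul_le_mul_of_nonneg_right (hw 0) (abs_nonneg _))
            (Finset.sum_le_sum fun k _ => mul_le_mul_of_nonneg_right (hw _) (abs_nonneg _))
  calc ωmin * ∑ l, |u l| = ∑ l : Fin (m+1), ωmin * |u l| := Finset.mul_sum _ _ _
    _ ≤ ∑ _l : Fin (m+1), tvNorm w u := Finset.sum_le_sum fun l _ => key l
    _ = ((m : ℝ) + 1) * tvNorm w u := by
        rw [Finset.sum_const, Finset.card_univ, Fintype.card_fin, nsmul_eq_mul]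
        push_cast; ring

lemma tv_le_sum_abs {m : ℕ} {w u : Fin (m+1) → ℝ} {ωmax : ℝ}
    (hmax0 : 0 ≤ ωmax) (hw : ∀ l, w l ≤ ωmax) :
    tvNorm w u ≤ 2 * ωmax * ∑ l, |u l| := by
  have h1 : tvNorm w u ≤ ωmax * |u 0| + ∑ k : Fin m, ωmax * (|u k.succ| + |u k.castSucc|) := by
    unfold tvNorm
    refine add_le_add (mul_le_mul_of_nonneg_right (hw 0) (abs_nonneg _))
      (Finset.sum_le_sum fun k _ => ?_)
    exact mul_le_mul (hw _) (abs_sub _ _) (abs_nonneg _) hmax0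
  have hsucc : ∑ l : Fin (m+1), |u l| = |u 0| + ∑ k : Fin m, |u k.succ| :=
    Fin.sum_univ_succ _
  have hcast : ∑ l : Fin (m+1), |u l| = (∑ k : Fin m, |u k.castSucc|) + |u (Fin.last m)| :=
    Fin.sum_univ_castSucc _
  have h2 : |u 0| + ∑ k : Fin m, (|u k.succ| + |u k.castSucc|) ≤ 2 * ∑ l, |u l| := by
    rw [Finset.sum_add_distrib]
    have := abs_nonneg (u (Fin.last m))
    linarith
  calc tvNorm w u ≤ ωmax * |u 0| + ∑ k : Fin m, ωmax * (|u k.succ| + |u k.castSucc|) := h1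
    _ = ωmax * (|u 0| + ∑ k : Fin m, (|u k.succ| + |u k.castSucc|)) := by
        rw [mul_add, Finset.mul_sum]
    _ ≤ ωmax * (2 * ∑ l, |u l|) := mul_le_mul_of_nonneg_left h2 hmax0
    _ = 2 * ωmax * ∑ l, |u l| := by ring

lemma tv_add_le {m : ℕ} {w : Fin (m+1) → ℝ} (hw : ∀ l, 0 ≤ w l) (a b : Fin (m+1) → ℝ) :
    tvNorm w (fun l => a l + b l) ≤ tvNorm w a + tvNorm w b := by
  unfold tvNorm
  have h0 : w 0 * |a 0 + b 0| ≤ w 0 * |a 0| + w 0 * |b 0| := by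
    rw [← mul_add]
    exact mul_le_mul_of_nonneg_left (abs_add_le _ _) (hw 0)
  have hk : ∀ k : Fin m, w k.succ * |(a k.succ + b k.succ) - (a k.castSucc + b k.castSucc)| ≤
      w k.succ * |a k.succ - a k.castSucc| + w k.succ * |b k.succ - b k.castSucc| := by
    intro k
    rw [← mul_add]
    refine mul_le_mul_of_nonneg_left ?_ (hw _)
    calc |(a k.succ + b k.succ) - (a k.castSucc + b k.castSucc)|
        = |(a k.succ - a k.castSucc) + (b k.succ - b k.castSucc)| := by ring_nf
      _ ≤ _ := abs_add_le _ _
  calc w 0 * |a 0 + b 0| + ∑ k : Fin m, w k.succ * |(a k.succ + b k.succ) - (a k.castSucc + b k.castSucc)|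
      ≤ (w 0 * |a 0| + w 0 * |b 0|) +
        ∑ k : Fin m, (w k.succ * |a k.succ - a k.castSucc| + w k.succ * |b k.succ - b k.castSucc|) :=
        add_le_add h0 (Finset.sum_le_sum fun k _ => hk k)
    _ = _ := by rw [Finset.sum_add_distrib]; ring

lemma restrict_decomp {m : ℕ} (K : Finset (Fin m)) (u : Fin m → ℝ) :
    u = fun l => restrictF K u l + restrictF Kᶜ u l := by
  funext l
  by_cases h : l ∈ K <;> simp [restrictF, h]

lemma sum_abs_restrict {m : ℕ} (K : Finset (Fin m)) (u : Fin m → ℝ) :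
    ∑ l, |restrictF K u l| = ∑ l ∈ K, |u l| := by
  rw [← Finset.sum_subset (Finset.subset_univ K) (fun l _ hl => by simp [restrictF, hl])]
  exact Finset.sum_congr rfl fun l hl => by simp [restrictF, hl]

/-- on the cone `C_{TV,ω}(L)`, the ℓ¹-norm of `β` is controlled by
the ℓ¹-norm (resp. `√|L|` times the ℓ²-norm) of the restriction `β_L`.
Here `ωmin ≤ ω j l ≤ ωmax` for all `j, l` with `ωmin > 0`, and
`d j + 1 ≤ dmax` for all `j`. -/
theorem cone_l1_bound {p : ℕ} (hp : 1 ≤ p) {d : Fin p → ℕ} (hd : ∀ j, 1 ≤ d j)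
    (ω : (j : Fin p) → Fin (d j + 1) → ℝ)
    (ωmin ωmax : ℝ) (hωmin : 0 < ωmin)
    (hlo : ∀ j l, ωmin ≤ ω j l) (hhi : ∀ j l, ω j l ≤ ωmax)
    (dmax : ℕ) (hdmax : ∀ j, d j + 1 ≤ dmax)
    (L : (j : Fin p) → Finset (Fin (d j + 1)))
    (β : (j : Fin p) → Fin (d j + 1) → ℝ)
    (hcone : ∑ j, tvNorm (ω j) (restrictF (L j)ᶜ (β j)) ≤
      3 * ∑ j, tvNorm (ω j) (restrictF (L j) (β j))) :
    (∑ j, ∑ l, |β j l|) ≤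
        8 * dmax * (ωmax / ωmin) * ∑ j, ∑ l ∈ L j, |β j l| ∧
      (∑ j, ∑ l, |β j l|) ≤
        Real.sqrt (∑ j, ((L j).card : ℝ)) * (8 * dmax * (ωmax / ωmin)) *
          Real.sqrt (∑ j, ∑ l ∈ L j, (β j l) ^ 2) := by
  have j0 : Fin p := ⟨0, hp⟩
  have hωmax : 0 < ωmax := lt_of_lt_of_le hωmin ((hlo j0 0).trans (hhi j0 0))
  have hw0 : ∀ j l, (0:ℝ) ≤ ω j l := fun j l => hωmin.le.trans (hlo j l)
  set S := ∑ j, ∑ l, |β j l| with hS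
  set A := ∑ j, ∑ l ∈ L j, |β j l| with hA
  have hA0 : 0 ≤ A := Finset.sum_nonneg fun j _ =>
    Finset.sum_nonneg fun l _ => abs_nonneg _
  -- total TV
  have htv_nonneg : ∀ j, 0 ≤ tvNorm (ω j) (β j) := fun j => tv_nonneg (hw0 j) _
  -- step 1: ωmin * S ≤ dmax * ∑ tv(β j)
  have step1 : ωmin * S ≤ (dmax : ℝ) * ∑ j, tvNorm (ω j) (β j) := by
    rw [hS, Finset.mul_sum, Finset.mul_sum]
    refine Finset.sum_le_sum fun j _ => ?_
    calc ωmin * ∑ l, |β j l| ≤ ((d j : ℝ) + 1) * tvNorm (ω j) (β j) :=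
          sum_abs_le_tv hωmin (hlo j)
      _ ≤ (dmax : ℝ) * tvNorm (ω j) (β j) := by
          refine mul_le_mul_of_nonneg_right ?_ (htv_nonneg j)
          exact_mod_cast hdmax j
  -- step 2: ∑ tv(β j) ≤ 4 * ∑ tv(β_L j)
  have step2 : ∑ j, tvNorm (ω j) (β j) ≤
      4 * ∑ j, tvNorm (ω j) (restrictF (L j) (β j)) := by
    have hdecomp : ∀ j, tvNorm (ω j) (β j) ≤
        tvNorm (ω j) (restrictF (L j) (β j)) + tvNorm (ω j) (restrictF (L j)ᶜ (β j)) := by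
      intro j
      calc tvNorm (ω j) (β j)
          = tvNorm (ω j) (fun l => restrictF (L j) (β j) l + restrictF (L j)ᶜ (β j) l) := by
            rw [← restrict_decomp]
        _ ≤ _ := tv_add_le (hw0 j) _ _
    calc ∑ j, tvNorm (ω j) (β j)
        ≤ ∑ j, (tvNorm (ω j) (restrictF (L j) (β j)) + tvNorm (ω j) (restrictF (L j)ᶜ (β j))) :=
          Finset.sum_le_sum fun j _ => hdecomp j
      _ = (∑ j, tvNorm (ω j) (restrictF (L j) (β j))) +
          ∑ j, tvNorm (ω j) (restrictF (L j)ᶜ (β j)) := Finset.sum_add_distrib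
      _ ≤ (∑ j, tvNorm (ω j) (restrictF (L j) (β j))) +
          3 * ∑ j, tvNorm (ω j) (restrictF (L j) (β j)) := by linarith
      _ = _ := by ring
  -- step 3: ∑ tv(β_L j) ≤ 2 * ωmax * A
  have step3 : ∑ j, tvNorm (ω j) (restrictF (L j) (β j)) ≤ 2 * ωmax * A := by
    rw [hA, Finset.mul_sum]
    refine Finset.sum_le_sum fun j _ => ?_
    calc tvNorm (ω j) (restrictF (L j) (β j))
        ≤ 2 * ωmax * ∑ l, |restrictF (L j) (β j) l| := tv_le_sum_abs hωmax.le (hhi j)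
      _ = 2 * ωmax * ∑ l ∈ L j, |β j l| := by rw [sum_abs_restrict]
  -- combine for part 1
  have part1 : S ≤ 8 * dmax * (ωmax / ωmin) * A := by
    have h : ωmin * S ≤ 8 * dmax * ωmax * A := by
      calc ωmin * S ≤ (dmax : ℝ) * ∑ j, tvNorm (ω j) (β j) := step1
        _ ≤ (dmax : ℝ) * (4 * ∑ j, tvNorm (ω j) (restrictF (L j) (β j))) := by
            refine mul_le_mul_of_nonneg_left ?_ (Nat.cast_nonneg _)
            linarith
        _ ≤ (dmax : ℝ) * (4 * (2 * ωmax * A)) := by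
            refine mul_le_mul_of_nonneg_left ?_ (Nat.cast_nonneg _)
            linarith
        _ = 8 * dmax * ωmax * A := by ring
    have : S ≤ (8 * dmax * ωmax * A) / ωmin := by
      rw [le_div_iff₀ hωmin]
      linarith
    calc S ≤ (8 * dmax * ωmax * A) / ωmin := this
      _ = 8 * dmax * (ωmax / ωmin) * A := by field_simp
  refine ⟨part1, ?_⟩
  -- Cauchy-Schwarz
  set s : Finset ((j : Fin p) × Fin (d j + 1)) := Finset.univ.sigma L with hs
  have hcard : (s.card : ℝ) = ∑ j, ((L j).card : ℝ) := by
    rw [hs, Finset.card_sigma]; push_cast; rfl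
  have hAs : A = ∑ x ∈ s, |β x.1 x.2| := by
    rw [hA, hs, Finset.sum_sigma]
  have hQs : ∑ j, ∑ l ∈ L j, (β j l) ^ 2 = ∑ x ∈ s, (β x.1 x.2) ^ 2 := by
    rw [hs, Finset.sum_sigma]
  have hCS : A ^ 2 ≤ (∑ j, ((L j).card : ℝ)) * ∑ j, ∑ l ∈ L j, (β j l) ^ 2 := by
    rw [hAs, hQs, ← hcard]
    calc (∑ x ∈ s, |β x.1 x.2|) ^ 2 ≤ (s.card : ℝ) * ∑ x ∈ s, |β x.1 x.2| ^ 2 :=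
        sq_sum_le_card_mul_sum_sq
      _ = (s.card : ℝ) * ∑ x ∈ s, (β x.1 x.2) ^ 2 := by
          congr 1; exact Finset.sum_congr rfl fun x _ => sq_abs _
  have hC0 : 0 ≤ ∑ j, ((L j).card : ℝ) := Finset.sum_nonneg fun j _ => Nat.cast_nonneg _
  have hQ0 : 0 ≤ ∑ j, ∑ l ∈ L j, (β j l) ^ 2 :=
    Finset.sum_nonneg fun j _ => Finset.sum_nonneg fun l _ => sq_nonneg _
  have hACS : A ≤ Real.sqrt (∑ j, ((L j).card : ℝ)) * Real.sqrt (∑ j, ∑ l ∈ L j, (β j l) ^ 2) := by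
    rw [← Real.sqrt_mul hC0]
    calc A = Real.sqrt (A ^ 2) := (Real.sqrt_sq hA0).symm
      _ ≤ _ := Real.sqrt_le_sqrt hCS
  have hK0 : (0:ℝ) ≤ 8 * dmax * (ωmax / ωmin) := by positivity
  calc S ≤ 8 * dmax * (ωmax / ωmin) * A := part1
    _ ≤ 8 * dmax * (ωmax / ωmin) *
        (Real.sqrt (∑ j, ((L j).card : ℝ)) * Real.sqrt (∑ j, ∑ l ∈ L j, (β j l) ^ 2)) :=
        mul_le_mul_of_nonneg_left hACS hK0
    _ = Real.sqrt (∑ j, ((L j).card : ℝ)) * (8 * dmax * (ωmax / ωmin)) *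
          Real.sqrt (∑ j, ∑ l ∈ L j, (β j l) ^ 2) := by ring
end

section
/- The function h : ℝ → ℝ defined by h(x) = (e^x − x − 1)/x² for x ≠ 0 and h(0) = 1/2 is strictly monotone increasing on all of ℝ. -/
/-! Taylor's formula with integral remainder gives
`(eˣ - x - 1) / x² = ∫₀¹ (1 - t) e^{tx} dt` for `x ≠ 0`, and the right-hand side equals `1/2`
at `x = 0`, so the function is this integral for every `x`. For each `t ∈ (0, 1)` the integrand
is strictly increasing in `x`, hence so is the integral. -/

open Real intervalIntegral MeasureTheory

theorem strictMono_intervalIntegral_of_strictMono {a b : ℝ} (hab : a < b) {f : ℝ → ℝ → ℝ}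
    (hint : ∀ x, IntervalIntegrable (f x) volume a b)
    (hmono : ∀ t ∈ Set.Ioo a b, StrictMono fun x => f x t) :
    StrictMono fun x => ∫ t in a..b, f x t := by
  intro x y hxy
  rw [← sub_pos, ← integral_sub (hint y) (hint x)]
  exact intervalIntegral_pos_of_pos_on ((hint y).sub (hint x))
    (fun t ht => sub_pos.2 (hmono t ht hxy)) hab

theorem continuous_one_sub_mul_exp_mul (x : ℝ) :
    Continuous fun t : ℝ => (1 - t) * exp (t * x) := by
  fun_prop

theorem hasDerivAt_one_sub_mul_exp_mul_antideriv {x : ℝ} (hx : x ≠ 0) (t : ℝ) :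
    HasDerivAt (fun t => (1 - t) * exp (t * x) / x + exp (t * x) / x ^ 2)
      ((1 - t) * exp (t * x)) t := by
  have hexp : HasDerivAt (fun t => exp (t * x)) (exp (t * x) * x) t := by
    simpa using ((hasDerivAt_id t).mul_const x).exp
  have hlin : HasDerivAt (fun t : ℝ => 1 - t) (-1) t := (hasDerivAt_id' t).const_sub 1
  refine (((hlin.mul hexp).div_const x).add (hexp.div_const (x ^ 2))).congr_deriv ?_
  field_simp
  ring

theorem integral_one_sub_mul_exp_mul {x : ℝ} (hx : x ≠ 0) :
    ∫ t in (0 : ℝ)..1, (1 - t) * exp (t * x) = (exp x - x - 1) / x ^ 2 := by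
  rw [integral_eq_sub_of_hasDerivAt (fun t _ => hasDerivAt_one_sub_mul_exp_mul_antideriv hx t)
    ((continuous_one_sub_mul_exp_mul x).intervalIntegrable 0 1)]
  field_simp
  simp only [sub_self, zero_mul, mul_zero, exp_zero, sub_zero, mul_one]
  ring

theorem integral_one_sub_mul_exp_mul_zero :
    ∫ t in (0 : ℝ)..1, (1 - t) * exp (t * 0) = 1 / 2 := by
  simp only [mul_zero, exp_zero, mul_one]
  rw [integral_sub intervalIntegrable_const intervalIntegral.intervalIntegrable_id]
  norm_num

theorem strictMono_integral_one_sub_mul_exp_mul :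
    StrictMono fun x : ℝ => ∫ t in (0 : ℝ)..1, (1 - t) * exp (t * x) := by
  refine strictMono_intervalIntegral_of_strictMono zero_lt_one
    (fun x => (continuous_one_sub_mul_exp_mul x).intervalIntegrable 0 1) fun t ht => ?_
  exact fun x y hxy => mul_lt_mul_of_pos_left
    (exp_lt_exp.2 (mul_lt_mul_of_pos_left hxy ht.1)) (sub_pos.2 ht.2)

/-- `x ↦ ψ(x)/x²` (with value `1/2` at `0`), where
`ψ(x) = eˣ − x − 1`, is strictly monotone increasing on `ℝ`. -/
theorem strictMono_expTaylorRem_div_sq :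
    StrictMono (fun x : ℝ =>
      if x = 0 then (1 / 2 : ℝ) else (Real.exp x - x - 1) / x ^ 2) := by
  have hrepr : (fun x : ℝ => if x = 0 then (1 / 2 : ℝ) else (Real.exp x - x - 1) / x ^ 2) =
      fun x => ∫ t in (0 : ℝ)..1, (1 - t) * exp (t * x) := by
    funext x
    split_ifs with hx
    · rw [hx, integral_one_sub_mul_exp_mul_zero]
    · rw [integral_one_sub_mul_exp_mul hx]
  rw [hrepr]
  exact strictMono_integral_one_sub_mul_exp_mul
end

section
/- For every real x > 0 one has x² ≤ (x + 2)(e^{−x} + x − 1); equivalently, with ψ(u) = e^u − u − 1, the function g(x) = x²/ψ(−x) satisfies g(x) ≤ x + 2 for all x > 0. -/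
/-! Multiplying by `eˣ`, the claim becomes `h x ≥ h 0` for `h x = (x - 2) eˣ + x`. This `h` is
monotone on all of `ℝ`: its derivative `(x - 1) eˣ + 1` is nonnegative because `1 - x ≤ e⁻ˣ`. -/

open Real

lemma sub_one_mul_exp_add_one_nonneg (x : ℝ) : 0 ≤ (x - 1) * exp x + 1 := by
  have h : (1 - x) * exp x ≤ exp (-x) * exp x :=
    mul_le_mul_of_nonneg_right (by linarith [add_one_le_exp (-x)]) (exp_pos x).le
  rw [← exp_add, neg_add_cancel, exp_zero] at h
  linarith

lemma monotone_sub_two_mul_exp_add : Monotone fun x : ℝ ↦ (x - 2) * exp x + x := by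
  refine monotone_of_hasDerivAt_nonneg (fun x ↦ ?_) sub_one_mul_exp_add_one_nonneg
  exact ((((hasDerivAt_id' x).sub_const 2).mul (hasDerivAt_exp x)).add
    (hasDerivAt_id' x)).congr_deriv (by ring)

lemma add_two_mul_exp_neg_add_sub_two_nonneg {x : ℝ} (hx : 0 ≤ x) :
    0 ≤ (x + 2) * exp (-x) + x - 2 := by
  have h : (0 - 2) * exp 0 + 0 ≤ (x - 2) * exp x + x := monotone_sub_two_mul_exp_add hx
  rw [exp_zero] at h
  have hexp : exp (-x) * exp x = 1 := by rw [← exp_add, neg_add_cancel, exp_zero]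
  have hprod := mul_nonneg (exp_pos (-x)).le (by linarith : 0 ≤ (x - 2) * exp x + x + 2)
  linear_combination hprod + (x - 2) * hexp

/-- for `x > 0`, `x² ≤ (x+2)(e^{−x} + x − 1)`, i.e.
`g(x) = x²/ψ(−x) ≤ x + 2`. -/
theorem sq_le_add_two_mul_psi_neg (x : ℝ) (hx : 0 < x) :
    x ^ 2 ≤ (x + 2) * (Real.exp (-x) + x - 1) := by
  linear_combination add_two_mul_exp_neg_add_sub_two_nonneg hx.le
end

section
/- Let n ≥ 1, let w_1,…,w_n ≥ 0 with Σ_i w_i > 0, and let u_1,…,u_n ∈ ℝ. Define G : ℝ → ℝ by G(η) = log( Σ_{i=1}^n w_i e^{η u_i} ). Then G is infinitely differentiable, G″(η) ≥ 0 for all η, and |G‴(η)| ≤ 2 (max_{1≤i≤n} |u_i|) · G″(η) for all η ∈ ℝ. -/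
/-- properties of the log-partition function
`G(η) = log (Σᵢ wᵢ e^{η uᵢ})` of a finite positive measure: `G` is `C^∞`,
convex (`G″ ≥ 0`), and `|G‴(η)| ≤ 2 (maxᵢ |uᵢ|) G″(η)` — here `M` is any
upper bound on the `|uᵢ|`. -/
theorem logsumexp_selfconcordant (n : ℕ) (hn : 1 ≤ n) (w u : Fin n → ℝ)
    (hw : ∀ i, 0 ≤ w i) (hwpos : 0 < ∑ i, w i)
    (M : ℝ) (hM : ∀ i, |u i| ≤ M) :
    ContDiff ℝ (⊤ : ℕ∞) (fun η : ℝ => Real.log (∑ i, w i * Real.exp (η * u i))) ∧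
      ∀ η : ℝ,
        0 ≤ iteratedDeriv 2
            (fun η : ℝ => Real.log (∑ i, w i * Real.exp (η * u i))) η ∧
          |iteratedDeriv 3
              (fun η : ℝ => Real.log (∑ i, w i * Real.exp (η * u i))) η| ≤
            2 * M * iteratedDeriv 2
              (fun η : ℝ => Real.log (∑ i, w i * Real.exp (η * u i))) η := by
  set S : ℕ → ℝ → ℝ := fun k η => ∑ i, w i * u i ^ k * Real.exp (η * u i) with hS
  have hM0 : 0 ≤ M := le_trans (abs_nonneg _) (hM ⟨0, hn⟩)
  have hSpos : ∀ η, 0 < S 0 η := by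
    intro η
    obtain ⟨j, hj⟩ : ∃ j, 0 < w j := by
      by_contra h
      push_neg at h
      have : ∑ i, w i ≤ 0 := Finset.sum_nonpos fun i _ => h i
      linarith
    apply Finset.sum_pos'
    · intro i _
      have := Real.exp_pos (η * u i)
      have := hw i
      simp only [pow_zero, mul_one]
      positivity
    · exact ⟨j, Finset.mem_univ j, by simp only [pow_zero, mul_one]; positivity⟩
  have hS0 : ∀ η, S 0 η = ∑ i, w i * Real.exp (η * u i) := by
    intro η; simp [hS]
  have hderiv : ∀ k η, HasDerivAt (S k) (S (k+1) η) η := by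
    intro k η
    have h : ∀ i ∈ Finset.univ, HasDerivAt
        (fun η => w i * u i ^ k * Real.exp (η * u i))
        (w i * u i ^ (k+1) * Real.exp (η * u i)) η := by
      intro i _
      have h1 : HasDerivAt (fun η : ℝ => η * u i) (u i) η := by
        simpa using (hasDerivAt_id η).mul_const (u i)
      have h2 := (Real.hasDerivAt_exp (η * u i)).comp η h1
      have h3 := h2.const_mul (w i * u i ^ k)
      exact h3.congr_deriv (by ring)
    have := HasDerivAt.fun_sum h
    simpa [hS] using this
  set F : ℝ → ℝ := fun η : ℝ => Real.log (∑ i, w i * Real.exp (η * u i)) with hF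
  have hFG : F = fun η => Real.log (S 0 η) := by
    funext η; rw [hS0]
  -- ContDiff part
  have hcd : ContDiff ℝ (⊤ : ℕ∞) F := by
    rw [hFG]
    apply ContDiff.log
    · apply ContDiff.sum
      intro i _
      exact contDiff_const.mul (Real.contDiff_exp.comp (contDiff_id.mul contDiff_const))
    · intro η; exact (hSpos η).ne'
  refine ⟨hcd, fun η₀ => ?_⟩
  -- derivative formulas
  have hd1 : ∀ η, HasDerivAt F (S 1 η / S 0 η) η := by
    intro η
    have h := (Real.hasDerivAt_log (hSpos η).ne').comp η (hderiv 0 η)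
    rw [hFG]
    exact h.congr_deriv (by rw [div_eq_inv_mul])
  have hD1 : deriv F = fun η => S 1 η / S 0 η := funext fun η => (hd1 η).deriv
  have hd2 : ∀ η, HasDerivAt (deriv F)
      ((S 2 η * S 0 η - S 1 η * S 1 η) / (S 0 η) ^ 2) η := by
    intro η
    rw [hD1]
    exact (hderiv 1 η).div (hderiv 0 η) (hSpos η).ne'
  have hD2 : deriv (deriv F) = fun η => (S 2 η * S 0 η - S 1 η * S 1 η) / (S 0 η) ^ 2 :=
    funext fun η => (hd2 η).deriv
  have hd3 : ∀ η, HasDerivAt (deriv (deriv F))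
      (((S 3 η * S 0 η + S 2 η * S 1 η - (S 2 η * S 1 η + S 1 η * S 2 η)) * (S 0 η) ^ 2
        - (S 2 η * S 0 η - S 1 η * S 1 η) * ((2 : ℕ) * (S 0 η) ^ 1 * S 1 η))
        / ((S 0 η) ^ 2) ^ 2) η := by
    intro η
    rw [hD2]
    have hnum : HasDerivAt (fun η => S 2 η * S 0 η - S 1 η * S 1 η)
        (S 3 η * S 0 η + S 2 η * S 1 η - (S 2 η * S 1 η + S 1 η * S 2 η)) η :=
      ((hderiv 2 η).mul (hderiv 0 η)).sub ((hderiv 1 η).mul (hderiv 1 η))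
    have hden : HasDerivAt (fun η => (S 0 η) ^ 2)
        ((2 : ℕ) * (S 0 η) ^ 1 * S 1 η) η := (hderiv 0 η).pow 2
    exact hnum.div hden (by have := hSpos η; positivity)
  have hD3 : deriv (deriv (deriv F)) η₀ =
      ((S 3 η₀ * S 0 η₀ + S 2 η₀ * S 1 η₀ - (S 2 η₀ * S 1 η₀ + S 1 η₀ * S 2 η₀)) * (S 0 η₀) ^ 2
        - (S 2 η₀ * S 0 η₀ - S 1 η₀ * S 1 η₀) * ((2 : ℕ) * (S 0 η₀) ^ 1 * S 1 η₀))
        / ((S 0 η₀) ^ 2) ^ 2 := (hd3 η₀).deriv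
  have hit2 : iteratedDeriv 2 F = deriv (deriv F) := by
    simp [iteratedDeriv_succ, iteratedDeriv_zero]
  have hit3 : iteratedDeriv 3 F = deriv (deriv (deriv F)) := by
    simp [iteratedDeriv_succ, iteratedDeriv_zero]
  -- central moments
  set T0 := S 0 η₀ with hT0
  set T1 := S 1 η₀ with hT1
  set T2 := S 2 η₀ with hT2
  set T3 := S 3 η₀ with hT3
  have hT0pos : 0 < T0 := hSpos η₀
  set m : ℝ := T1 / T0 with hm
  set c : Fin n → ℝ := fun i => w i * Real.exp (η₀ * u i) with hc
  have hcnn : ∀ i, 0 ≤ c i := fun i => by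
    have := hw i; have := Real.exp_pos (η₀ * u i); positivity
  have expand2 : ∑ i, c i * (u i - m) ^ 2 = T2 - 2 * m * T1 + m ^ 2 * T0 := by
    have h : ∀ i ∈ Finset.univ, c i * (u i - m) ^ 2 =
        w i * u i ^ 2 * Real.exp (η₀ * u i)
          - 2 * m * (w i * u i ^ 1 * Real.exp (η₀ * u i))
          + m ^ 2 * (w i * u i ^ 0 * Real.exp (η₀ * u i)) := by
      intro i _; simp only [hc]; ring
    rw [Finset.sum_congr rfl h]
    simp only [Finset.sum_add_distrib, Finset.sum_sub_distrib, ← Finset.mul_sum]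
    rfl
  have expand3 : ∑ i, c i * (u i - m) ^ 3 =
      T3 - 3 * m * T2 + 3 * m ^ 2 * T1 - m ^ 3 * T0 := by
    have h : ∀ i ∈ Finset.univ, c i * (u i - m) ^ 3 =
        w i * u i ^ 3 * Real.exp (η₀ * u i)
          - 3 * m * (w i * u i ^ 2 * Real.exp (η₀ * u i))
          + 3 * m ^ 2 * (w i * u i ^ 1 * Real.exp (η₀ * u i))
          - m ^ 3 * (w i * u i ^ 0 * Real.exp (η₀ * u i)) := by
      intro i _; simp only [hc]; ring
    rw [Finset.sum_congr rfl h]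
    simp only [Finset.sum_add_distrib, Finset.sum_sub_distrib, ← Finset.mul_sum]
    rfl
  have key2 : iteratedDeriv 2 F η₀ = (∑ i, c i * (u i - m) ^ 2) / T0 := by
    rw [hit2, hD2, expand2, hm]
    show (T2 * T0 - T1 * T1) / T0 ^ 2 = (T2 - 2 * (T1 / T0) * T1 + (T1 / T0) ^ 2 * T0) / T0
    field_simp
    ring
  have key3 : iteratedDeriv 3 F η₀ = (∑ i, c i * (u i - m) ^ 3) / T0 := by
    rw [hit3, hD3, expand3, hm]
    push_cast
    field_simp
    ring
  clear hd1 hd2 hd3 hD1 hD2 hD3 hderiv hcd hit2 hit3 hFG expand2 expand3 hS0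
  have hmb : |m| ≤ M := by
    have hT1abs : |T1| ≤ M * T0 := by
      rw [hT1, hT0]
      simp only [hS]
      calc |∑ i, w i * u i ^ 1 * Real.exp (η₀ * u i)|
          ≤ ∑ i, |w i * u i ^ 1 * Real.exp (η₀ * u i)| :=
            Finset.abs_sum_le_sum_abs _ _
        _ ≤ ∑ i, M * (w i * u i ^ 0 * Real.exp (η₀ * u i)) := by
            apply Finset.sum_le_sum
            intro i _
            rw [abs_mul, abs_mul, abs_of_nonneg (hw i),
              abs_of_pos (Real.exp_pos _), pow_one, pow_zero, mul_one]
            have h1 := hM i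
            have h2 := hw i
            have h3 := (Real.exp_pos (η₀ * u i)).le
            nlinarith [mul_nonneg (mul_nonneg h2 h3) (sub_nonneg.mpr h1)]
        _ = M * ∑ i, w i * u i ^ 0 * Real.exp (η₀ * u i) := by
            rw [Finset.mul_sum]
    rw [hm, abs_div, abs_of_pos hT0pos, div_le_iff₀ hT0pos]
    linarith
  have step : |∑ i, c i * (u i - m) ^ 3| ≤ 2 * M * ∑ i, c i * (u i - m) ^ 2 := by
    calc |∑ i, c i * (u i - m) ^ 3| ≤ ∑ i, |c i * (u i - m) ^ 3| :=
          Finset.abs_sum_le_sum_abs _ _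
      _ ≤ ∑ i, 2 * M * (c i * (u i - m) ^ 2) := by
          apply Finset.sum_le_sum
          intro i _
          have hx : |u i - m| ≤ 2 * M := by
            have h1 := abs_le.mp (hM i)
            have h2 := abs_le.mp hmb
            exact abs_le.mpr ⟨by linarith, by linarith⟩
          have habs3 : |(u i - m) ^ 3| = (u i - m) ^ 2 * |u i - m| := by
            rw [abs_pow, pow_succ, sq_abs]
          rw [abs_mul, abs_of_nonneg (hcnn i), habs3]
          nlinarith [mul_nonneg (mul_nonneg (hcnn i) (sq_nonneg (u i - m)))
            (sub_nonneg.mpr hx)]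
      _ = 2 * M * ∑ i, c i * (u i - m) ^ 2 := by rw [Finset.mul_sum]
  constructor
  · rw [key2]
    exact div_nonneg (Finset.sum_nonneg fun i _ =>
      mul_nonneg (hcnn i) (sq_nonneg _)) hT0pos.le
  · rw [key2, key3, abs_div, abs_of_pos hT0pos, div_le_iff₀ hT0pos]
    have hrw : 2 * M * ((∑ i, c i * (u i - m) ^ 2) / T0) * T0
        = 2 * M * ∑ i, c i * (u i - m) ^ 2 := by
      rw [mul_assoc, div_mul_cancel₀ _ hT0pos.ne']
    rw [hrw]
    exact step
end

section
/- Let S > 0 and let G : ℝ → ℝ be three times differentiable with G″(t) ≥ 0 and |G‴(t)| ≤ S · G″(t) for all t ∈ ℝ. Then for every η ≥ 0, (G″(0)/S²)·(e^{−Sη} + Sη − 1) ≤ G(η) − G(0) − η G′(0) ≤ (G″(0)/S²)·(e^{Sη} − Sη − 1). -/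
open Real Set

/-! The hypothesis `|G‴| ≤ S G″` is a linear differential inequality for `G″`, so Grönwall's
lemma squeezes `G″(t)` between `G″(0) e^{-St}` and `G″(0) e^{St}` for `t ≥ 0`. Integrating these
two bounds twice from `0`, by the comparison principle for derivatives, bounds the first-order
Taylor remainder of `G` by that of `t ↦ G″(0) e^{±St} / S²`. -/

theorem le_of_hasDerivAt_le {f f' g g' : ℝ → ℝ} {a : ℝ}
    (hf : ∀ t, HasDerivAt f (f' t) t) (hg : ∀ t, HasDerivAt g (g' t) t)
    (ha : f a ≤ g a) (h : ∀ t, a ≤ t → f' t ≤ g' t) {t : ℝ} (ht : a ≤ t) : f t ≤ g t :=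
  image_le_of_deriv_right_le_deriv_boundary (fun x _ => (hf x).continuousAt.continuousWithinAt)
    (fun x _ => (hf x).hasDerivWithinAt) ha
    (fun x _ => (hg x).continuousAt.continuousWithinAt) (fun x _ => (hg x).hasDerivWithinAt)
    (fun x hx => h x hx.1) ⟨ht, le_rfl⟩

theorem le_of_hasDerivAt_hasDerivAt_le {f f' f'' g g' g'' : ℝ → ℝ} {a : ℝ}
    (hf : ∀ t, HasDerivAt f (f' t) t) (hf' : ∀ t, HasDerivAt f' (f'' t) t)
    (hg : ∀ t, HasDerivAt g (g' t) t) (hg' : ∀ t, HasDerivAt g' (g'' t) t)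
    (ha : f a ≤ g a) (ha' : f' a ≤ g' a) (h : ∀ t, a ≤ t → f'' t ≤ g'' t)
    {t : ℝ} (ht : a ≤ t) : f t ≤ g t :=
  le_of_hasDerivAt_le hf hg ha (fun _ hs => le_of_hasDerivAt_le hf' hg' ha' h hs) ht

theorem le_mul_exp_of_hasDerivAt_le_mul {u u' : ℝ → ℝ} {K a : ℝ}
    (hu : ∀ t, HasDerivAt u (u' t) t) (h : ∀ t, a ≤ t → u' t ≤ K * u t)
    {t : ℝ} (ht : a ≤ t) : u t ≤ u a * exp (K * (t - a)) := by
  have := le_gronwallBound_of_liminf_deriv_right_le (ε := 0)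
    (fun x _ => (hu x).continuousAt.continuousWithinAt)
    (fun x _ _ hr => (hu x).hasDerivWithinAt.liminf_right_slope_le hr) le_rfl
    (fun x hx => by simpa using h x hx.1) t ⟨ht, le_rfl⟩
  rwa [gronwallBound_ε0] at this

theorem mul_exp_le_of_mul_le_hasDerivAt {u u' : ℝ → ℝ} {K a : ℝ}
    (hu : ∀ t, HasDerivAt u (u' t) t) (h : ∀ t, a ≤ t → K * u t ≤ u' t)
    {t : ℝ} (ht : a ≤ t) : u a * exp (K * (t - a)) ≤ u t := by
  have := le_mul_exp_of_hasDerivAt_le_mul (u := fun t => -u t) (fun t => (hu t).neg) (K := K)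
    (fun s hs => by linarith [h s hs]) ht
  linarith

theorem taylor_remainder_le_of_le_mul_exp {G G' G'' : ℝ → ℝ} {σ c : ℝ} (hσ : σ ≠ 0)
    (hG : ∀ t, HasDerivAt G (G' t) t) (hG' : ∀ t, HasDerivAt G' (G'' t) t)
    (h : ∀ t, 0 ≤ t → G'' t ≤ c * exp (σ * t)) {η : ℝ} (hη : 0 ≤ η) :
    G η - G 0 - η * G' 0 ≤ c / σ ^ 2 * (exp (σ * η) - σ * η - 1) := by
  have hexp (t : ℝ) : HasDerivAt (fun t => exp (σ * t)) (σ * exp (σ * t)) t := by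
    simpa [mul_comm] using ((hasDerivAt_id t).const_mul σ).exp
  have hg (t : ℝ) : HasDerivAt (fun t => G 0 + t * G' 0 + c / σ ^ 2 * (exp (σ * t) - σ * t - 1))
      (G' 0 + c / σ * (exp (σ * t) - 1)) t := by
    refine ((((hasDerivAt_id t).mul_const (G' 0)).const_add (G 0)).add
      ((((hexp t).sub ((hasDerivAt_id t).const_mul σ)).sub_const 1).const_mul
        (c / σ ^ 2))).congr_deriv ?_
    field_simp
  have hg' (t : ℝ) :
      HasDerivAt (fun t => G' 0 + c / σ * (exp (σ * t) - 1)) (c * exp (σ * t)) t := by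
    refine ((((hexp t).sub_const 1).const_mul (c / σ)).const_add (G' 0)).congr_deriv ?_
    field_simp
  have := le_of_hasDerivAt_hasDerivAt_le hG hG' hg hg' (by simp) (by simp) h hη
  linarith

theorem le_taylor_remainder_of_mul_exp_le {G G' G'' : ℝ → ℝ} {σ c : ℝ} (hσ : σ ≠ 0)
    (hG : ∀ t, HasDerivAt G (G' t) t) (hG' : ∀ t, HasDerivAt G' (G'' t) t)
    (h : ∀ t, 0 ≤ t → c * exp (σ * t) ≤ G'' t) {η : ℝ} (hη : 0 ≤ η) :
    c / σ ^ 2 * (exp (σ * η) - σ * η - 1) ≤ G η - G 0 - η * G' 0 := by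
  have := taylor_remainder_le_of_le_mul_exp (c := -c) hσ (fun t => (hG t).neg)
    (fun t => (hG' t).neg) (fun t ht => by linarith [h t ht]) hη
  simp only [Pi.neg_apply, neg_div, neg_mul] at this
  linarith

theorem selfconcordance_taylor_bounds_general (S : ℝ) (hS : 0 < S)
    (G G' G'' G''' : ℝ → ℝ)
    (hG : ∀ t, HasDerivAt G (G' t) t)
    (hG' : ∀ t, HasDerivAt G' (G'' t) t)
    (hG'' : ∀ t, HasDerivAt G'' (G''' t) t)
    (hsc : ∀ t, |G''' t| ≤ S * G'' t) :
    ∀ η : ℝ, 0 ≤ η →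
      (G'' 0 / S ^ 2) * (Real.exp (-(S * η)) + S * η - 1) ≤
          G η - G 0 - η * G' 0 ∧
        G η - G 0 - η * G' 0 ≤
          (G'' 0 / S ^ 2) * (Real.exp (S * η) - S * η - 1) := by
  intro η hη
  have hG''_upper (t : ℝ) (ht : 0 ≤ t) : G'' t ≤ G'' 0 * exp (S * t) := by
    simpa using le_mul_exp_of_hasDerivAt_le_mul hG'' (fun s _ => (abs_le.mp (hsc s)).2) ht
  have hG''_lower (t : ℝ) (ht : 0 ≤ t) : G'' 0 * exp (-S * t) ≤ G'' t := by
    simpa using mul_exp_le_of_mul_le_hasDerivAt (K := -S) hG''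
      (fun s _ => neg_mul S (G'' s) ▸ (abs_le.mp (hsc s)).1) ht
  refine ⟨?_, taylor_remainder_le_of_le_mul_exp hS.ne' hG hG' hG''_upper hη⟩
  have := le_taylor_remainder_of_mul_exp_le (neg_ne_zero.2 hS.ne') hG hG' hG''_lower hη
  rwa [neg_sq, neg_mul, sub_neg_eq_add] at this

/-- self-concordance inequality.  If `G` is three times
differentiable with `G″ ≥ 0` and `|G‴| ≤ S·G″` everywhere, then for `η ≥ 0`
the first-order Taylor remainder of `G` satisfies
`(G″(0)/S²)(e^{−Sη} + Sη − 1) ≤ G(η) − G(0) − η G′(0) ≤ (G″(0)/S²)(e^{Sη} − Sη − 1)`. -/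
theorem selfconcordance_taylor_bounds (S : ℝ) (hS : 0 < S)
    (G G' G'' G''' : ℝ → ℝ)
    (hG : ∀ t, HasDerivAt G (G' t) t)
    (hG' : ∀ t, HasDerivAt G' (G'' t) t)
    (hG'' : ∀ t, HasDerivAt G'' (G''' t) t)
    (hconv : ∀ t, 0 ≤ G'' t)
    (hsc : ∀ t, |G''' t| ≤ S * G'' t) :
    ∀ η : ℝ, 0 ≤ η →
      (G'' 0 / S ^ 2) * (Real.exp (-(S * η)) + S * η - 1) ≤
          G η - G 0 - η * G' 0 ∧
        G η - G 0 - η * G' 0 ≤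
          (G'' 0 / S ^ 2) * (Real.exp (S * η) - S * η - 1) :=
  selfconcordance_taylor_bounds_general S hS G G' G'' G''' hG hG' hG'' hsc
end

section
/- Let β̂ be a minimizer over 𝓑(R) of the extended-real-valued function β ↦ ℓ_n(β) + bina(β), i.e. ℓ_n(β̂) + bina(β̂) ≤ ℓ_n(γ) + bina(γ) for all γ ∈ 𝓑(R). Let β ∈ 𝓑(R) satisfy n_{j,•}ᵀ β_{j,•} = 0 for all j = 1,…,p, and let h = (h_{1,•},…,h_{p,•}) ∈ ℝ^N be such that for each j, h_{j,•} is a subgradient at β_{j,•} of the convex function u ↦ Σ_{l=2}^{d_j+1} ω_{j,l} |u_l − u_{l−1}| on ℝ^{d_j+1}. Then ℓ_n is differentiable at β̂ and (β̂ − β)ᵀ ∇ℓ_n(β̂) ≤ −(β̂ − β)ᵀ h. -/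
noncomputable section

/-- Inner product of two block vectors `β, x ∈ ℝ^N`, `N = Σⱼ (dⱼ + 1)`. -/
def innerB {p : ℕ} {d : Fin p → ℕ} (β x : (j : Fin p) → Fin (d j + 1) → ℝ) : ℝ :=
  ∑ j, ∑ l, β j l * x j l

/-- `S⁰(f,t) = Σᵢ Yᵢ(t) e^{fᵢ}` with `Yᵢ(t) = 1(zᵢ ≥ t)`. -/
def S0 {n : ℕ} (z f : Fin n → ℝ) (t : ℝ) : ℝ :=
  ∑ i, if t ≤ z i then Real.exp (f i) else 0

/-- The empirical partial negative log-likelihood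
`ℓₙ(β) = −(1/n) Σ_{i : δᵢ = 1, zᵢ ≤ τ} [βᵀxᵢ − log S⁰(Xβ, zᵢ)]`. -/
def ellN {n p : ℕ} {d : Fin p → ℕ} (τ : ℝ)
    (x : Fin n → (j : Fin p) → Fin (d j + 1) → ℝ)
    (z : Fin n → ℝ) (δ : Fin n → Bool)
    (β : (j : Fin p) → Fin (d j + 1) → ℝ) : ℝ :=
  -(1 / (n : ℝ)) * ∑ i, if δ i = true ∧ z i ≤ τ then
      innerB β (x i) - Real.log (S0 z (fun i' => innerB β (x i')) (z i))
    else 0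

/-- The binarsity penalty, valued in the extended reals. -/
def binaE {p : ℕ} {d : Fin p → ℕ} (ω : (j : Fin p) → Fin (d j) → ℝ)
    (nv : (j : Fin p) → Fin (d j + 1) → ℝ)
    (β : (j : Fin p) → Fin (d j + 1) → ℝ) : EReal :=
  ∑ j, (((∑ l : Fin (d j), ω j l * |β j l.succ - β j l.castSucc| : ℝ) : EReal)
    + if (∑ l, nv j l * β j l) = 0 then (0 : EReal) else ⊤)

/-- Membership in the ball `𝓑(R) = {β : Σⱼ maxₗ |β_{j,l}| ≤ R}`. -/
def inB {p : ℕ} {d : Fin p → ℕ} (R : ℝ)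
    (β : (j : Fin p) → Fin (d j + 1) → ℝ) : Prop :=
  ∑ j, Finset.univ.sup' Finset.univ_nonempty (fun l => |β j l|) ≤ R

end


/-!
A minimiser `β̂` of `ℓₙ + bina` has finite penalty, so it satisfies the linear constraints, and on
the convex set `𝓑(R) ∩ {constraints}` the penalty is the convex weighted total variation `TV`.
First-order optimality of `ℓₙ + TV` along the segment from `β̂` to `β` gives
`0 ≤ ∇ℓₙ(β̂)ᵀ(β − β̂) + TV(β) − TV(β̂)`, and summing the blockwise subgradient inequalities at
`β̂` bounds `TV(β) − TV(β̂)` by `hᵀ(β − β̂)`.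
-/

open Set

theorem EReal.coe_finset_sum {ι : Type*} (s : Finset ι) (f : ι → ℝ) :
    ((∑ i ∈ s, f i : ℝ) : EReal) = ∑ i ∈ s, (f i : EReal) := by
  classical
  induction s using Finset.induction_on with
  | empty => simp
  | insert a s ha ih => rw [Finset.sum_insert ha, Finset.sum_insert ha, EReal.coe_add, ih]

section Convexity

variable {E : Type*} [AddCommGroup E] [Module ℝ E] {s : Set E}

theorem convexOn_finset_sum {ι : Type*} (t : Finset ι) {f : ι → E → ℝ} (hs : Convex ℝ s)
    (hf : ∀ i ∈ t, ConvexOn ℝ s (f i)) : ConvexOn ℝ s fun x => ∑ i ∈ t, f i x := by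
  classical
  induction t using Finset.induction_on with
  | empty => simpa using convexOn_const (0 : ℝ) hs
  | insert a t ha ih =>
    simp only [Finset.sum_insert ha]
    exact (hf a (Finset.mem_insert_self a t)).add
      (ih fun i hi => hf i (Finset.mem_insert_of_mem hi))

theorem convexOn_finset_sup' {ι : Type*} (t : Finset ι) (ht : t.Nonempty) {f : ι → E → ℝ}
    (hs : Convex ℝ s) (hf : ∀ i ∈ t, ConvexOn ℝ s (f i)) :
    ConvexOn ℝ s fun x => t.sup' ht (f · x) := by
  refine ⟨hs, fun x hx y hy a b ha hb hab => Finset.sup'_le _ _ fun i hi => ?_⟩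
  calc f i (a • x + b • y) ≤ a • f i x + b • f i y := (hf i hi).2 hx hy ha hb hab
    _ ≤ a • t.sup' ht (f · x) + b • t.sup' ht (f · y) := by
      gcongr <;> exact Finset.le_sup' (f · _) hi

theorem convexOn_abs_linearMap (L : E →ₗ[ℝ] ℝ) : ConvexOn ℝ univ fun x => |L x| :=
  convexOn_univ_norm.comp_linearMap L

end Convexity

theorem IsMinOn.fderiv_sub_add_sub_nonneg_of_convexOn {E : Type*} [NormedAddCommGroup E]
    [NormedSpace ℝ E] {f g : E → ℝ} {s : Set E} {a b : E} (hmin : IsMinOn (f + g) s a)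
    (hg : ConvexOn ℝ s g) (hf : DifferentiableAt ℝ f a) (ha : a ∈ s) (hb : b ∈ s) :
    0 ≤ fderiv ℝ f a (b - a) + (g b - g a) := by
  -- As `g` lies below its chord, `φ t - φ 0 ≥ (f + g) (a + t • (b - a)) - (f + g) a ≥ 0`.
  set φ : ℝ → ℝ := fun t => f (a + t • (b - a)) + t * (g b - g a)
  have hφmin : IsMinOn φ (Icc 0 1) 0 := fun t ht => by
    have hmem : a + t • (b - a) ∈ s := hg.1.add_smul_sub_mem ha hb ht
    have hgt : g (a + t • (b - a)) ≤ (1 - t) * g a + t * g b := by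
      have := hg.2 ha hb (sub_nonneg.2 ht.2) ht.1 (sub_add_cancel 1 t)
      rwa [show (1 - t) • a + t • b = a + t • (b - a) by module] at this
    have hle : (f + g) a ≤ (f + g) (a + t • (b - a)) := hmin hmem
    simp only [Pi.add_apply] at hle
    show φ 0 ≤ φ t
    simp only [φ, zero_smul, add_zero, zero_mul]
    linarith
  have hφ : HasDerivAt φ (fderiv ℝ f a (b - a) + (g b - g a)) 0 := by
    have hline : HasDerivAt (fun t : ℝ => a + t • (b - a)) (b - a) 0 := by
      simpa using ((hasDerivAt_id (0 : ℝ)).smul_const (b - a)).const_add a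
    have hf' : HasFDerivAt f (fderiv ℝ f a) (a + (0 : ℝ) • (b - a)) := by
      simpa using hf.hasFDerivAt
    exact (hf'.comp_hasDerivAt 0 hline).add (hasDerivAt_mul_const (g b - g a))
  have hcone : (1 : ℝ) ∈ posTangentConeAt (Icc 0 1) 0 :=
    mem_posTangentConeAt_of_segment_subset (by simp [segment_eq_Icc])
  simpa using hφmin.localize.hasFDerivWithinAt_nonneg hφ.hasFDerivAt.hasFDerivWithinAt hcone

section BlockVectors

variable {p : ℕ} {d : Fin p → ℕ}

def weightedTV (ω : (j : Fin p) → Fin (d j) → ℝ) (u : (j : Fin p) → Fin (d j + 1) → ℝ) : ℝ :=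
  ∑ j, ∑ l : Fin (d j), ω j l * |u j l.succ - u j l.castSucc|

def constraintSet (nv : (j : Fin p) → Fin (d j + 1) → ℝ) :
    Set ((j : Fin p) → Fin (d j + 1) → ℝ) :=
  {u | ∀ j, ∑ l, nv j l * u j l = 0}

theorem convexOn_weightedTV {ω : (j : Fin p) → Fin (d j) → ℝ} (hω : ∀ j l, 0 ≤ ω j l) :
    ConvexOn ℝ univ (weightedTV ω) :=
  convexOn_finset_sum _ convex_univ fun j _ => convexOn_finset_sum _ convex_univ fun l _ =>
    (convexOn_abs_linearMap ((LinearMap.proj (R := ℝ) (φ := fun _ => ℝ) l.succ -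
      LinearMap.proj l.castSucc) ∘ₗ LinearMap.proj (φ := fun j => Fin (d j + 1) → ℝ) j)).smul
      (hω j l)

theorem convex_setOf_inB (R : ℝ) : Convex ℝ {β : (j : Fin p) → Fin (d j + 1) → ℝ | inB R β} := by
  simpa [inB] using
    (convexOn_finset_sum _ convex_univ fun j _ => convexOn_finset_sup' _ _ convex_univ fun l _ =>
      convexOn_abs_linearMap (LinearMap.proj (R := ℝ) (φ := fun _ => ℝ) l ∘ₗ
        LinearMap.proj (φ := fun j => Fin (d j + 1) → ℝ) j)).convex_le R

theorem convex_constraintSet (nv : (j : Fin p) → Fin (d j + 1) → ℝ) :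
    Convex ℝ (constraintSet nv) := by
  intro u hu v hv a b _ _ _ j
  simp only [Pi.add_apply, Pi.smul_apply, smul_eq_mul, mul_add, Finset.sum_add_distrib,
    mul_left_comm _ a, mul_left_comm _ b, ← Finset.mul_sum, hu j, hv j, mul_zero, add_zero]

theorem binaE_eq_coe_weightedTV (ω : (j : Fin p) → Fin (d j) → ℝ)
    {nv u : (j : Fin p) → Fin (d j + 1) → ℝ} (hu : u ∈ constraintSet nv) :
    binaE ω nv u = weightedTV ω u := by
  simp only [binaE, hu _, if_true, add_zero, weightedTV, EReal.coe_finset_sum]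

theorem binaE_eq_top {ω : (j : Fin p) → Fin (d j) → ℝ} (hω : ∀ j l, 0 ≤ ω j l)
    {nv u : (j : Fin p) → Fin (d j + 1) → ℝ} {j : Fin p} (hj : ∑ l, nv j l * u j l ≠ 0) :
    binaE ω nv u = ⊤ := by
  refine top_le_iff.1 (le_trans ?_ (Finset.single_le_sum (fun i _ => ?_) (Finset.mem_univ j)))
  · simp [hj]
  · have hTV :
        (0 : EReal) ≤ ((∑ l : Fin (d i), ω i l * |u i l.succ - u i l.castSucc| : ℝ) : EReal) :=
      EReal.coe_nonneg.2 (Finset.sum_nonneg fun l _ => mul_nonneg (hω i l) (abs_nonneg _))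
    split_ifs <;> simp [hTV]

theorem weightedTV_add_sum_le_of_blockwise {ω : (j : Fin p) → Fin (d j) → ℝ}
    {β h : (j : Fin p) → Fin (d j + 1) → ℝ}
    (hsub : ∀ j, ∀ v : Fin (d j + 1) → ℝ,
      (∑ l : Fin (d j), ω j l * |β j l.succ - β j l.castSucc|) + ∑ l, h j l * (v l - β j l) ≤
        ∑ l : Fin (d j), ω j l * |v l.succ - v l.castSucc|)
    (γ : (j : Fin p) → Fin (d j + 1) → ℝ) :
    weightedTV ω β + ∑ j, ∑ l, h j l * (γ j l - β j l) ≤ weightedTV ω γ := by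
  simpa only [weightedTV, ← Finset.sum_add_distrib] using
    Finset.sum_le_sum fun j (_ : j ∈ Finset.univ) => hsub j (γ j)

end BlockVectors

section Likelihood

variable {n p : ℕ} {d : Fin p → ℕ}

theorem differentiable_innerB_left (v : (j : Fin p) → Fin (d j + 1) → ℝ) :
    Differentiable ℝ fun β : (j : Fin p) → Fin (d j + 1) → ℝ => innerB β v := by
  unfold innerB
  fun_prop

theorem S0_pos (z f : Fin n → ℝ) (i : Fin n) : 0 < S0 z f (z i) :=
  Finset.sum_pos' (fun k _ => by split_ifs <;> positivity)
    ⟨i, Finset.mem_univ i, by simpa using Real.exp_pos (f i)⟩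

theorem differentiable_ellN (τ : ℝ) (x : Fin n → (j : Fin p) → Fin (d j + 1) → ℝ)
    (z : Fin n → ℝ) (δ : Fin n → Bool) : Differentiable ℝ (ellN τ x z δ) := by
  have hS0 (t : ℝ) : Differentiable ℝ fun β : (j : Fin p) → Fin (d j + 1) → ℝ =>
      S0 z (fun k => innerB β (x k)) t := by
    refine Differentiable.fun_sum fun k _ => ?_
    by_cases hk : t ≤ z k
    · simpa only [hk, if_true] using (differentiable_innerB_left (x k)).exp
    · simp only [hk, if_false, differentiable_const]
  refine Differentiable.const_mul (Differentiable.fun_sum fun i _ => ?_) _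
  by_cases hi : δ i = true ∧ z i ≤ τ
  · simpa only [hi, and_self, if_true] using (differentiable_innerB_left (x i)).fun_sub
      ((hS0 (z i)).log fun β => (S0_pos z _ i).ne')
  · simp only [hi, if_false, differentiable_const]

end Likelihood

theorem kkt_monotonicity_general {n p : ℕ} {d : Fin p → ℕ}
    (ω : (j : Fin p) → Fin (d j) → ℝ) (hω : ∀ j l, 0 < ω j l)
    (nv : (j : Fin p) → Fin (d j + 1) → ℝ)
    (R τ : ℝ)
    (x : Fin n → (j : Fin p) → Fin (d j + 1) → ℝ)
    (z : Fin n → ℝ) (δ : Fin n → Bool)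
    (βh : (j : Fin p) → Fin (d j + 1) → ℝ) (hβhB : inB R βh)
    (hmin : ∀ γ, inB R γ →
      ((ellN τ x z δ βh : ℝ) : EReal) + binaE ω nv βh ≤
        ((ellN τ x z δ γ : ℝ) : EReal) + binaE ω nv γ)
    (β : (j : Fin p) → Fin (d j + 1) → ℝ) (hβB : inB R β)
    (hβc : ∀ j, ∑ l, nv j l * β j l = 0)
    (h : (j : Fin p) → Fin (d j + 1) → ℝ)
    (hsub : ∀ j, ∀ v : Fin (d j + 1) → ℝ,
      (∑ l : Fin (d j), ω j l * |β j l.succ - β j l.castSucc|) +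
          ∑ l, h j l * (v l - β j l) ≤
        ∑ l : Fin (d j), ω j l * |v l.succ - v l.castSucc|) :
    DifferentiableAt ℝ (ellN τ x z δ) βh ∧
      fderiv ℝ (ellN τ x z δ) βh (βh - β) ≤
        -∑ j, ∑ l, (βh j l - β j l) * h j l := by
  have hω' : ∀ j l, 0 ≤ ω j l := fun j l => (hω j l).le
  have hdiff := differentiable_ellN τ x z δ
  refine ⟨hdiff βh, ?_⟩
  have hβhc : βh ∈ constraintSet nv := by
    by_contra hβhc
    obtain ⟨j, hj⟩ := not_forall.1 hβhc
    have hβmin := hmin β hβB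
    rw [binaE_eq_top hω' hj, binaE_eq_coe_weightedTV ω hβc, EReal.coe_add_top,
      ← EReal.coe_add] at hβmin
    exact EReal.coe_ne_top _ (top_le_iff.1 hβmin)
  set s := {γ | inB R γ} ∩ constraintSet nv
  have hminOn : IsMinOn (ellN τ x z δ + weightedTV ω) s βh := fun γ hγ => by
    have hγmin := hmin γ hγ.1
    rwa [binaE_eq_coe_weightedTV ω hβhc, binaE_eq_coe_weightedTV ω hγ.2, ← EReal.coe_add,
      ← EReal.coe_add, EReal.coe_le_coe_iff] at hγmin
  have hopt := hminOn.fderiv_sub_add_sub_nonneg_of_convexOn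
    ((convexOn_weightedTV hω').subset (subset_univ s)
      ((convex_setOf_inB R).inter (convex_constraintSet nv)))
    (hdiff βh) ⟨hβhB, hβhc⟩ ⟨hβB, hβc⟩
  have hsubgrad := weightedTV_add_sum_le_of_blockwise hsub βh
  simp_rw [mul_comm (h _ _)] at hsubgrad
  rw [← neg_sub β βh, map_neg]
  linarith

/-- KKT/monotonicity: if `β̂` minimizes `ℓₙ + bina` over `𝓑(R)`,
`β ∈ 𝓑(R)` satisfies the linear constraints, and `h` is a blockwise subgradient
of the weighted TV penalty at `β`, then `ℓₙ` is differentiable at `β̂` and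
`(β̂ − β)ᵀ ∇ℓₙ(β̂) ≤ −(β̂ − β)ᵀ h`. -/
theorem kkt_monotonicity {n p : ℕ} {d : Fin p → ℕ}
    (hn : 1 ≤ n) (hp : 1 ≤ p) (hd : ∀ j, 1 ≤ d j)
    (ω : (j : Fin p) → Fin (d j) → ℝ) (hω : ∀ j l, 0 < ω j l)
    (nv : (j : Fin p) → Fin (d j + 1) → ℝ)
    (R τ : ℝ) (hR : 0 < R) (hτ : 0 < τ)
    (x : Fin n → (j : Fin p) → Fin (d j + 1) → ℝ)
    (z : Fin n → ℝ) (hz : ∀ i, 0 ≤ z i) (δ : Fin n → Bool)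
    (βh : (j : Fin p) → Fin (d j + 1) → ℝ) (hβhB : inB R βh)
    (hmin : ∀ γ, inB R γ →
      ((ellN τ x z δ βh : ℝ) : EReal) + binaE ω nv βh ≤
        ((ellN τ x z δ γ : ℝ) : EReal) + binaE ω nv γ)
    (β : (j : Fin p) → Fin (d j + 1) → ℝ) (hβB : inB R β)
    (hβc : ∀ j, ∑ l, nv j l * β j l = 0)
    (h : (j : Fin p) → Fin (d j + 1) → ℝ)
    (hsub : ∀ j, ∀ v : Fin (d j + 1) → ℝ,
      (∑ l : Fin (d j), ω j l * |β j l.succ - β j l.castSucc|) +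
          ∑ l, h j l * (v l - β j l) ≤
        ∑ l : Fin (d j), ω j l * |v l.succ - v l.castSucc|) :
    DifferentiableAt ℝ (ellN τ x z δ) βh ∧
      fderiv ℝ (ellN τ x z δ) βh (βh - β) ≤
        -∑ j, ∑ l, (βh j l - β j l) * h j l :=
  kkt_monotonicity_general ω hω nv R τ x z δ βh hβhB hmin β hβB hβc h hsub
end

section
/- For every f ∈ ℝⁿ, the empirical Kullback–Leibler divergence satisfies KL_n(a, f) = ℓ(f) − ℓ(a), and moreover KL_n(a, f) ≥ 0. -/
open MeasureTheory

noncomputable section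

/-- The compensated loss
`ℓ(f) = −(1/n) Σᵢ ∫₀^τ [fᵢ − log S⁰(f,t)] Yᵢ(t) λ₀(t) e^{aᵢ} dt`. -/
def compLoss {n : ℕ} (τ : ℝ) (z a : Fin n → ℝ) (lam : ℝ → ℝ)
    (f : Fin n → ℝ) : ℝ :=
  -(1 / (n : ℝ)) * ∑ i, ∫ t in (0 : ℝ)..τ,
    (f i - Real.log (S0 z f t)) * (if t ≤ z i then (1 : ℝ) else 0) *
      lam t * Real.exp (a i)

/-- The empirical Kullback–Leibler divergence
`KLₙ(a,f) = (1/n) Σᵢ ∫₀^τ log( e^{aᵢ} S⁰(f,t) / (e^{fᵢ} S⁰(a,t)) ) Yᵢ(t) λ₀(t) e^{aᵢ} dt`. -/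
def KLn {n : ℕ} (τ : ℝ) (z a : Fin n → ℝ) (lam : ℝ → ℝ)
    (f : Fin n → ℝ) : ℝ :=
  (1 / (n : ℝ)) * ∑ i, ∫ t in (0 : ℝ)..τ,
    Real.log (Real.exp (a i) * S0 z f t / (Real.exp (f i) * S0 z a t)) *
      (if t ≤ z i then (1 : ℝ) else 0) * lam t * Real.exp (a i)

end

/-! Where `Yᵢ(t) = 1` the logarithm in `KLₙ` splits as `(aᵢ - log S⁰(a,t)) - (fᵢ - log S⁰(f,t))`,
so the `i`-th integrand of `KLₙ(a,f)` is the difference of those of `ℓ(a)` and `ℓ(f)`; these are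
integrable because `fᵢ ≤ log S⁰(f,t) ≤ log Σⱼ e^{fⱼ}` there. For the sign, sum over `i` under the
integral: at each `t` this is the relative entropy of the weights `e^{aᵢ}` against
`e^{fᵢ} S⁰(a,t) / S⁰(f,t)` on the risk set, which have the same total mass `S⁰(a,t)`, so it is
nonnegative by Gibbs' inequality `p - q ≤ p log (p / q)`. -/

open Real Finset

theorem Finset.sum_sub_sum_le_sum_mul_log_div {ι : Type*} (s : Finset ι) {p q : ι → ℝ}
    (hp : ∀ i ∈ s, 0 < p i) (hq : ∀ i ∈ s, 0 < q i) :
    ∑ i ∈ s, p i - ∑ i ∈ s, q i ≤ ∑ i ∈ s, p i * log (p i / q i) := by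
  rw [← sum_sub_distrib]
  refine sum_le_sum fun i hi => ?_
  have hpi := hp i hi
  calc p i - q i = p i * (1 - (p i / q i)⁻¹) := by field_simp
    _ ≤ p i * log (p i / q i) :=
      mul_le_mul_of_nonneg_left (one_sub_inv_le_log_of_pos (div_pos hpi (hq i hi))) hpi.le

section S0

variable {n : ℕ} (z g : Fin n → ℝ) {t : ℝ} {i : Fin n}

theorem S0_eq_sum_filter (t : ℝ) : S0 z g t = ∑ j ∈ univ.filter (t ≤ z ·), exp (g j) :=
  (sum_filter _ _).symm

theorem exp_le_S0 (h : t ≤ z i) : exp (g i) ≤ S0 z g t := by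
  rw [S0_eq_sum_filter]
  exact single_le_sum (fun j _ => (exp_pos (g j)).le) (by simpa using h)

theorem S0_pos_s13 (h : t ≤ z i) : 0 < S0 z g t :=
  (exp_pos _).trans_le (exp_le_S0 z g h)

theorem S0_le_sum_exp (t : ℝ) : S0 z g t ≤ ∑ j, exp (g j) := by
  rw [S0_eq_sum_filter]
  exact sum_le_sum_of_subset_of_nonneg (filter_subset _ _) fun j _ _ => (exp_pos (g j)).le

theorem measurable_S0 : Measurable (S0 z g) :=
  Finset.measurable_sum _ fun _ _ => Measurable.ite measurableSet_Iic measurable_const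
    measurable_const

theorem abs_sub_log_S0_le (h : t ≤ z i) :
    |g i - log (S0 z g t)| ≤ log (∑ j, exp (g j)) - g i := by
  have hS := S0_pos_s13 z g h
  have hlow : g i ≤ log (S0 z g t) := (le_log_iff_exp_le hS).2 (exp_le_S0 z g h)
  have hup : log (S0 z g t) ≤ log (∑ j, exp (g j)) := log_le_log hS (S0_le_sum_exp z g t)
  rw [abs_sub_comm, abs_of_nonneg (sub_nonneg.2 hlow)]
  linarith

theorem norm_sub_log_S0_mul_indicator_le (t : ℝ) :
    ‖(g i - log (S0 z g t)) * (if t ≤ z i then (1 : ℝ) else 0)‖ ≤ log (∑ j, exp (g j)) - g i := by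
  split_ifs with h
  · simpa using abs_sub_log_S0_le z g h
  -- the bound is nonnegative, as its instance at `t = z i` shows
  · simpa using (abs_nonneg _).trans (abs_sub_log_S0_le z g (le_refl (z i)))

theorem intervalIntegrable_sub_log_S0_mul {lam : ℝ → ℝ} {μ : Measure ℝ} {t₀ t₁ : ℝ}
    (hlam : IntervalIntegrable lam μ t₀ t₁) :
    IntervalIntegrable (fun t => (g i - log (S0 z g t)) * (if t ≤ z i then (1 : ℝ) else 0) * lam t)
      μ t₀ t₁ := by
  rw [intervalIntegrable_iff] at hlam ⊢
  refine hlam.bdd_mul ?_ (ae_of_all _ (norm_sub_log_S0_mul_indicator_le z g))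
  exact ((measurable_const.sub (measurable_log.comp (measurable_S0 z g))).mul
    (Measurable.ite measurableSet_Iic measurable_const measurable_const)).aestronglyMeasurable

end S0

section KL

variable {n : ℕ} (z a f : Fin n → ℝ) (lam : ℝ → ℝ)

theorem log_ratio_mul_indicator_eq (i : Fin n) (t : ℝ) :
    log (exp (a i) * S0 z f t / (exp (f i) * S0 z a t)) * (if t ≤ z i then (1 : ℝ) else 0) =
      ((a i - log (S0 z a t)) - (f i - log (S0 z f t))) * (if t ≤ z i then (1 : ℝ) else 0) := by
  split_ifs with h
  · have hf := S0_pos_s13 z f h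
    have ha := S0_pos_s13 z a h
    rw [log_div (by positivity) (by positivity), log_mul (exp_ne_zero _) hf.ne',
      log_mul (exp_ne_zero _) ha.ne', log_exp, log_exp]
    ring
  · simp

theorem sum_log_ratio_mul_indicator_nonneg (t : ℝ) :
    0 ≤ ∑ i, log (exp (a i) * S0 z f t / (exp (f i) * S0 z a t)) *
      (if t ≤ z i then (1 : ℝ) else 0) * exp (a i) := by
  set R := univ.filter (t ≤ z ·)
  have hR : ∑ i, log (exp (a i) * S0 z f t / (exp (f i) * S0 z a t)) *
      (if t ≤ z i then (1 : ℝ) else 0) * exp (a i) =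
      ∑ i ∈ R, exp (a i) * log (exp (a i) * S0 z f t / (exp (f i) * S0 z a t)) := by
    rw [sum_filter]
    exact sum_congr rfl fun i _ => by split_ifs <;> ring
  rw [hR]
  rcases R.eq_empty_or_nonempty with hempty | ⟨i₀, hi₀⟩
  · simp [hempty]
  have ha := S0_pos_s13 z a (mem_filter.1 hi₀).2
  have hf := S0_pos_s13 z f (mem_filter.1 hi₀).2
  have hmass : ∑ i ∈ R, exp (f i) * S0 z a t / S0 z f t = ∑ i ∈ R, exp (a i) := by
    rw [← sum_div, ← sum_mul, ← S0_eq_sum_filter, ← S0_eq_sum_filter, mul_div_cancel_left₀ _ hf.ne']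
  have hgibbs := R.sum_sub_sum_le_sum_mul_log_div (p := fun i => exp (a i))
    (q := fun i => exp (f i) * S0 z a t / S0 z f t) (fun i _ => exp_pos _)
    fun i _ => by positivity
  simpa only [div_div_eq_mul_div, hmass, sub_self] using hgibbs

theorem log_ratio_integrand_eq_sub (i : Fin n) :
    (fun t => log (exp (a i) * S0 z f t / (exp (f i) * S0 z a t)) *
      (if t ≤ z i then (1 : ℝ) else 0) * lam t * exp (a i)) =
    fun t => (a i - log (S0 z a t)) * (if t ≤ z i then (1 : ℝ) else 0) * lam t * exp (a i) -
      (f i - log (S0 z f t)) * (if t ≤ z i then (1 : ℝ) else 0) * lam t * exp (a i) := by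
  funext t
  rw [log_ratio_mul_indicator_eq]
  ring

theorem KLn_eq_compLoss_sub {τ : ℝ} (hlam : IntervalIntegrable lam volume 0 τ) :
    KLn τ z a lam f = compLoss τ z a lam f - compLoss τ z a lam a := by
  have hloss (g : Fin n → ℝ) (i : Fin n) :=
    (intervalIntegrable_sub_log_S0_mul z g (i := i) hlam).mul_const (exp (a i))
  simp only [KLn, compLoss, log_ratio_integrand_eq_sub,
    fun i => intervalIntegral.integral_sub (hloss a i) (hloss f i), sum_sub_distrib]
  ring

theorem KLn_nonneg {τ : ℝ} (hτ : 0 ≤ τ) (hlam : IntervalIntegrable lam volume 0 τ)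
    (hpos : ∀ t, 0 ≤ lam t) : 0 ≤ KLn τ z a lam f := by
  unfold KLn
  rw [← intervalIntegral.integral_finsetSum fun i _ => ?_]
  · refine mul_nonneg (by positivity) (intervalIntegral.integral_nonneg hτ fun t _ => ?_)
    calc 0 ≤ lam t * ∑ i, log (exp (a i) * S0 z f t / (exp (f i) * S0 z a t)) *
          (if t ≤ z i then (1 : ℝ) else 0) * exp (a i) :=
          mul_nonneg (hpos t) (sum_log_ratio_mul_indicator_nonneg z a f t)
      _ = _ := by rw [mul_sum]; exact sum_congr rfl fun i _ => by ring
  rw [log_ratio_integrand_eq_sub]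
  exact ((intervalIntegrable_sub_log_S0_mul z a hlam).mul_const _).sub
    ((intervalIntegrable_sub_log_S0_mul z f hlam).mul_const _)

end KL

theorem KL_eq_loss_diff_and_nonneg_general (n : ℕ) (τ : ℝ) (hτ : 0 < τ)
    (z : Fin n → ℝ) (a : Fin n → ℝ)
    (lam : ℝ → ℝ) (hpos : ∀ t, 0 ≤ lam t)
    (hint : IntervalIntegrable lam MeasureTheory.volume 0 τ)
    (f : Fin n → ℝ) :
    KLn τ z a lam f = compLoss τ z a lam f - compLoss τ z a lam a ∧
      0 ≤ KLn τ z a lam f :=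
  ⟨KLn_eq_compLoss_sub z a f lam hint, KLn_nonneg z a f lam hτ.le hint hpos⟩

/-- `KLₙ(a, f) = ℓ(f) − ℓ(a)` and `KLₙ(a, f) ≥ 0`. -/
theorem KL_eq_loss_diff_and_nonneg (n : ℕ) (hn : 1 ≤ n) (τ : ℝ) (hτ : 0 < τ)
    (z : Fin n → ℝ) (hz : ∀ i, 0 ≤ z i) (a : Fin n → ℝ)
    (lam : ℝ → ℝ) (hmeas : Measurable lam) (hpos : ∀ t, 0 ≤ lam t)
    (hint : IntervalIntegrable lam MeasureTheory.volume 0 τ)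
    (f : Fin n → ℝ) :
    KLn τ z a lam f = compLoss τ z a lam f - compLoss τ z a lam a ∧
      0 ≤ KLn τ z a lam f :=
  KL_eq_loss_diff_and_nonneg_general n τ hτ z a lam hpos hint f
end

section
/- Let Z₁,…,Z_n be independent and identically distributed real-valued random variables on a probability space, let τ ∈ ℝ, set c = P(Z₁ ≥ τ), and let a₁,…,a_n ∈ ℝ with max_{1≤i≤n} |a_i| ≤ f∞. Then P( inf_{t ∈ [0,τ]} (1/n) Σ_{i=1}^n 1(Z_i ≥ t) e^{a_i} ≥ e^{−f∞} c/2 ) ≥ 1 − 2 e^{−n c²/2}. -/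
/-!
For `t ≤ τ`, every `Zᵢ ≥ τ` also satisfies `Zᵢ ≥ t` and carries weight `e^{aᵢ} ≥ e^{-f∞}`, so the
infimum over `[0, τ]` is at least `e^{-f∞}` times the fraction of indices with `Zᵢ ≥ τ`. That
fraction is an average of `n` independent Bernoulli(`c`) variables, and Hoeffding's inequality
bounds the probability that it drops to `c / 2` by `e^{-n c² / 2}`.
-/

open MeasureTheory ProbabilityTheory Finset Real

theorem measureReal_sum_le_sum_integral_sub_le {Ω ι : Type*} [MeasurableSpace Ω]
    {μ : Measure Ω} [IsProbabilityMeasure μ] {X : ι → Ω → ℝ} (hindep : iIndepFun X μ)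
    (hX : ∀ i, AEMeasurable (X i) μ) (hX01 : ∀ i, ∀ᵐ ω ∂μ, X i ω ∈ Set.Icc 0 1)
    (s : Finset ι) {ε : ℝ} (hε : 0 ≤ ε) :
    μ.real {ω | ∑ i ∈ s, X i ω ≤ ∑ i ∈ s, μ[X i] - ε} ≤ exp (-2 * ε ^ 2 / #s) := by
  set Y : ι → Ω → ℝ := fun i ω ↦ -X i ω - ∫ ω, -X i ω ∂μ
  have hY : ∀ i ∈ s, HasSubgaussianMGF (Y i) ((‖(0 : ℝ) - (-1)‖₊ / 2) ^ 2) μ := fun i _ ↦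
    hasSubgaussianMGF_of_mem_Icc (hX i).neg <| (hX01 i).mono fun ω h ↦
      ⟨neg_le_neg h.2, neg_nonpos.2 h.1⟩
  have hYindep : iIndepFun Y μ :=
    hindep.comp (fun i (y : ℝ) ↦ -y - ∫ ω, -X i ω ∂μ) fun i ↦ by fun_prop
  convert HasSubgaussianMGF.measure_sum_ge_le_of_iIndepFun hYindep hY hε using 2
  · ext ω
    simp only [Y, Set.mem_ofPred_eq, integral_neg, sum_sub_distrib, sum_neg_distrib]
    constructor <;> intro h <;> linarith
  · simp only [sum_const, nsmul_eq_mul, nnnorm_one, NNReal.coe_mul, NNReal.coe_natCast,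
      NNReal.coe_pow, NNReal.coe_div, NNReal.coe_one, NNReal.coe_ofNat, sub_neg_eq_add, zero_add]
    ring

theorem integral_ite_le_eq_measureReal {Ω : Type*} [MeasurableSpace Ω] {μ : Measure Ω}
    {W : Ω → ℝ} (hW : AEMeasurable W μ) (τ : ℝ) :
    μ[fun ω ↦ if τ ≤ W ω then (1 : ℝ) else 0] = μ.real {ω | τ ≤ W ω} := by
  have := integral_indicator₀ (f := fun _ ↦ (1 : ℝ)) (μ := μ)
    (hW.nullMeasurableSet_preimage (measurableSet_Ici (a := τ)))
  rwa [setIntegral_const, smul_eq_mul, mul_one] at this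

theorem ofReal_one_sub_measureReal_le_measure_compl {Ω : Type*} [MeasurableSpace Ω]
    {μ : Measure Ω} [IsProbabilityMeasure μ] (s : Set Ω) :
    ENNReal.ofReal (1 - μ.real s) ≤ μ sᶜ := by
  rw [ENNReal.ofReal_sub _ measureReal_nonneg, ENNReal.ofReal_one, ofReal_measureReal,
    tsub_le_iff_left, ← measure_univ (μ := μ)]
  exact measure_univ_le_add_compl s

theorem exp_neg_mul_sum_ite_le_sum_ite_mul_exp {ι : Type*} (s : Finset ι) {z a : ι → ℝ}
    {M t τ : ℝ} (ha : ∀ i ∈ s, |a i| ≤ M) (htτ : t ≤ τ) :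
    exp (-M) * ∑ i ∈ s, (if τ ≤ z i then (1 : ℝ) else 0) ≤
      ∑ i ∈ s, (if t ≤ z i then (1 : ℝ) else 0) * exp (a i) := by
  rw [mul_sum]
  refine sum_le_sum fun i hi ↦ ?_
  split_ifs with hτ ht
  · simpa using neg_le_of_abs_le (ha i hi)
  · exact absurd (htτ.trans hτ) ht
  · rw [mul_zero, one_mul]
    positivity
  · simp

theorem exp_neg_mul_div_two_le_avg_of_count_ge {n : ℕ} (hn : 0 < n) {z a : Fin n → ℝ}
    {M c t τ : ℝ} (ha : ∀ i, |a i| ≤ M) (htτ : t ≤ τ)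
    (hcount : n * c / 2 ≤ ∑ i, if τ ≤ z i then (1 : ℝ) else 0) :
    exp (-M) * c / 2 ≤ 1 / (n : ℝ) * ∑ i, (if t ≤ z i then (1 : ℝ) else 0) * exp (a i) :=
  calc exp (-M) * c / 2 = 1 / n * (exp (-M) * (n * c / 2)) := by field_simp
    _ ≤ 1 / n * (exp (-M) * ∑ i, if τ ≤ z i then (1 : ℝ) else 0) := by gcongr
    _ ≤ _ := by
        gcongr
        exact exp_neg_mul_sum_ite_le_sum_ite_mul_exp _ (fun i _ ↦ ha i) htτ

theorem at_risk_uniform_lower_bound_general {Ω : Type*} [MeasurableSpace Ω]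
    (P : Measure Ω) [IsProbabilityMeasure P]
    (n : ℕ) (hn : 0 < n) (Z : Fin n → Ω → ℝ)
    (hindep : iIndepFun Z P)
    (hident : ∀ i, IdentDistrib (Z i) (Z ⟨0, hn⟩) P P)
    (τ : ℝ) (a : Fin n → ℝ) (finf : ℝ) (ha : ∀ i, |a i| ≤ finf) :
    ENNReal.ofReal
        (1 - 2 * Real.exp (-((n : ℝ) *
          ((P {ω | τ ≤ Z ⟨0, hn⟩ ω}).toReal) ^ 2) / 2)) ≤
      P {ω | ∀ t ∈ Set.Icc (0 : ℝ) τ,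
        Real.exp (-finf) * (P {ω' | τ ≤ Z ⟨0, hn⟩ ω'}).toReal / 2 ≤
          (1 / (n : ℝ)) *
            ∑ i, (if t ≤ Z i ω then (1 : ℝ) else 0) * Real.exp (a i)} := by
  set c := (P {ω | τ ≤ Z ⟨0, hn⟩ ω}).toReal
  set X : Fin n → Ω → ℝ := fun i ω ↦ if τ ≤ Z i ω then 1 else 0
  have hstep : Measurable fun x : ℝ ↦ if τ ≤ x then (1 : ℝ) else 0 :=
    Measurable.ite measurableSet_Ici measurable_const measurable_const
  have hXmean : ∀ i, P[X i] = c := fun i ↦ by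
    rw [integral_ite_le_eq_measureReal (hident i).aemeasurable_fst, measureReal_def]
    exact congrArg ENNReal.toReal ((hident i).measure_mem_eq measurableSet_Ici)
  set B := {ω | ∑ i, X i ω ≤ ∑ i, P[X i] - n * c / 2}
  have hB : P.real B ≤ exp (-(n * c ^ 2) / 2) := by
    refine (measureReal_sum_le_sum_integral_sub_le (hindep.comp _ fun _ ↦ hstep)
      (fun i ↦ hstep.comp_aemeasurable (hident i).aemeasurable_fst)
      (fun i ↦ ae_of_all _ fun ω ↦ ?_) _ (by positivity)).trans_eq ?_
    · by_cases h : τ ≤ Z i ω <;> simp [h]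
    · rw [card_univ, Fintype.card_fin]
      field_simp
  have hgood : ∀ ω ∉ B, ∀ t ∈ Set.Icc (0 : ℝ) τ, exp (-finf) * c / 2 ≤
      1 / (n : ℝ) * ∑ i, (if t ≤ Z i ω then (1 : ℝ) else 0) * exp (a i) := by
    intro ω hω t ht
    refine exp_neg_mul_div_two_le_avg_of_count_ge hn ha ht.2 ?_
    simp only [B, hXmean, sum_const, card_univ, Fintype.card_fin, nsmul_eq_mul,
      Set.mem_ofPred_eq, not_le] at hω
    linarith
  calc ENNReal.ofReal (1 - 2 * exp (-(n * c ^ 2) / 2))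
      ≤ ENNReal.ofReal (1 - P.real B) :=
        ENNReal.ofReal_le_ofReal (by linarith [exp_pos (-(n * c ^ 2) / 2)])
    _ ≤ P Bᶜ := ofReal_one_sub_measureReal_le_measure_compl B
    _ ≤ _ := measure_mono hgood

/-- for i.i.d. real random variables `Z₁,…,Zₙ`, with
`c = P(Z₁ ≥ τ)` and `|aᵢ| ≤ f∞`, the empirical weighted at-risk average
stays above `e^{−f∞} c/2` uniformly on `[0,τ]` with probability at least
`1 − 2 e^{−n c²/2}`. -/
theorem at_risk_uniform_lower_bound {Ω : Type*} [MeasurableSpace Ω]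
    (P : Measure Ω) [IsProbabilityMeasure P]
    (n : ℕ) (hn : 0 < n) (Z : Fin n → Ω → ℝ) (hZmeas : ∀ i, Measurable (Z i))
    (hindep : iIndepFun Z P)
    (hident : ∀ i, IdentDistrib (Z i) (Z ⟨0, hn⟩) P P)
    (τ : ℝ) (a : Fin n → ℝ) (finf : ℝ) (ha : ∀ i, |a i| ≤ finf) :
    ENNReal.ofReal
        (1 - 2 * Real.exp (-((n : ℝ) *
          ((P {ω | τ ≤ Z ⟨0, hn⟩ ω}).toReal) ^ 2) / 2)) ≤
      P {ω | ∀ t ∈ Set.Icc (0 : ℝ) τ,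
        Real.exp (-finf) * (P {ω' | τ ≤ Z ⟨0, hn⟩ ω'}).toReal / 2 ≤
          (1 / (n : ℝ)) *
            ∑ i, (if t ≤ Z i ω then (1 : ℝ) else 0) * Real.exp (a i)} :=
  at_risk_uniform_lower_bound_general P n hn Z hindep hident τ a finf ha
end
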